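/- Let (Ω, 𝒜, μ, d) be a metric measure space with a Borel probability measure μ, let {B_i}_{i∈ℕ} be a sequence of balls in Ω, and let κ ∈ (0,1] be a constant. Suppose that for every G ∈ ℕ there is a finite subcollection 𝒦_G ⊆ {B_i : i ≥ G} of pairwise disjoint balls such that, writing E_G := ⋃_{L∈𝒦_G} L, one has μ(E_G) ≥ κ and μ(E_G ∩ E_{G'}) ≤ κ⁻² μ(E_G) μ(E_{G'}) for all G, G' ∈ ℕ. Then there is a subsequence {L_i}_{i∈ℕ} of {B_i}_{i∈ℕ} with ∑_{i=1}^∞ μ(L_i) = ∞ and, for infinitely many Q ∈ ℕ, ∑_{s,t=1}^Q μ(L_s ∩ L_t) ≤ κ⁻² (∑_{s=1}^Q μ(L_s))². -/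

import Mathlib

open MeasureTheory Filter Set Metric
open scoped ENNReal
open Function

/-!
Choose generations `G₀ = 0` and `Gₙ₊₁ = max 𝒦_{Gₙ} + 1`. The collections `𝒦_{Gₙ}` then occupy
consecutive disjoint intervals of indices, and we enumerate their union in increasing order.
When `Q` is the number of indices in the first `m` collections, disjointness of the balls inside
each collection turns `∑_{s,t ≤ Q} μ(L_s ∩ L_t)` into `∑_{a,b < m} μ(E_{Gₐ} ∩ E_{G_b})` and
`∑_{s ≤ Q} μ(L_s)` into `∑_{a < m} μ(E_{Gₐ})`, so the pairwise bound on the `E_G` sums to the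
claimed one, while `μ(E_G) ≥ κ` makes the series diverge.
-/

namespace Nat

variable {p : ℕ → Prop} [DecidablePred p]

theorem image_nth_range_count (hp : (Set.ofPred p).Infinite) (n : ℕ) :
    (Finset.range (count p n)).image (nth p) = {x ∈ Finset.range n | p x} := by
  ext j
  simp only [Finset.mem_image, Finset.mem_range, Finset.mem_filter]
  constructor
  · rintro ⟨i, hi, rfl⟩
    exact ⟨(lt_nth_iff_count_lt hp).mp hi, nth_mem_of_infinite hp i⟩
  · rintro ⟨hjn, hj⟩
    exact ⟨count p j, count_strict_mono hj hjn, nth_count hj⟩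

theorem sum_range_count_nth {M : Type*} [AddCommMonoid M] (hp : (Set.ofPred p).Infinite)
    (n : ℕ) (f : ℕ → M) :
    ∑ s ∈ Finset.range (count p n), f (nth p s) = ∑ x ∈ Finset.range n with p x, f x := by
  rw [← image_nth_range_count hp, Finset.sum_image fun a _ b _ h => nth_injective hp h]

end Nat

theorem sum_sum_le_mul_sq_of_le {ι R : Type*} [CommSemiring R] [PartialOrder R]
    [IsOrderedAddMonoid R] {s : Finset ι} {u : ι → ι → R} {v : ι → R} {c : R}
    (h : ∀ a ∈ s, ∀ b ∈ s, u a b ≤ c * (v a * v b)) :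
    ∑ a ∈ s, ∑ b ∈ s, u a b ≤ c * (∑ a ∈ s, v a) ^ 2 := by
  calc ∑ a ∈ s, ∑ b ∈ s, u a b ≤ ∑ a ∈ s, ∑ b ∈ s, c * (v a * v b) :=
        Finset.sum_le_sum fun a ha => Finset.sum_le_sum fun b hb => h a ha b hb
    _ = c * (∑ a ∈ s, v a) ^ 2 := by
        simp_rw [sq, Finset.sum_mul_sum, Finset.mul_sum]

theorem measure_biUnion_inter_biUnion_finset {Ω ι : Type*} [MeasurableSpace Ω] (μ : Measure Ω)
    {B : ι → Set Ω} {s t : Finset ι} (hs : (s : Set ι).PairwiseDisjoint B)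
    (ht : (t : Set ι).PairwiseDisjoint B) (hB : ∀ i, MeasurableSet (B i)) :
    μ ((⋃ i ∈ s, B i) ∩ ⋃ j ∈ t, B j) = ∑ i ∈ s, ∑ j ∈ t, μ (B i ∩ B j) := by
  have hBt := t.measurableSet_biUnion fun j _ => hB j
  rw [iUnion₂_inter, measure_biUnion_finset (hs.mono fun i => inter_subset_left)
    fun i _ => (hB i).inter hBt]
  refine Finset.sum_congr rfl fun i _ => ?_
  rw [inter_iUnion₂, measure_biUnion_finset (ht.mono fun j => inter_subset_right)
    fun j _ => (hB i).inter (hB j)]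

theorem exists_seq_forall_subset_Ico (K : ℕ → Finset ℕ) (hK : ∀ G, ∀ i ∈ K G, G ≤ i) :
    ∃ N : ℕ → ℕ, ∀ n, K (N n) ⊆ Finset.Ico (N n) (N (n + 1)) := by
  refine ⟨fun n => (fun G => (K G).sup id + 1)^[n] 0, fun n i hi => ?_⟩
  simp only [Function.iterate_succ_apply', Finset.mem_Ico]
  exact ⟨hK _ i hi, Nat.lt_succ_of_le (Finset.le_sup (f := id) hi)⟩

section Blocks

variable {C : ℕ → Finset ℕ} {N : ℕ → ℕ}

noncomputable def blockEnum (C : ℕ → Finset ℕ) : ℕ → ℕ :=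
  Nat.nth fun j => ∃ n, j ∈ C n

theorem strictMono_of_forall_subset_Ico (hC : ∀ n, (C n).Nonempty)
    (hCN : ∀ n, C n ⊆ Finset.Ico (N n) (N (n + 1))) : StrictMono N := by
  refine strictMono_nat_of_lt_succ fun n => ?_
  obtain ⟨i, hi⟩ := hC n
  have hiN := Finset.mem_Ico.mp (hCN n hi)
  exact hiN.1.trans_lt hiN.2

theorem pairwise_disjoint_of_forall_subset_Ico (hN : Monotone N)
    (hCN : ∀ n, C n ⊆ Finset.Ico (N n) (N (n + 1))) : Pairwise (Disjoint on C) := by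
  refine (pairwise_disjoint_on C).mpr fun a b hab => Finset.disjoint_left.mpr fun i hia hib => ?_
  have hi := Finset.mem_Ico.mp (hCN a hia)
  have hi' := Finset.mem_Ico.mp (hCN b hib)
  exact absurd (hi.2.trans_le ((hN hab).trans hi'.1)) (lt_irrefl i)

theorem infinite_setOf_exists_mem_of_forall_subset_Ico (hC : ∀ n, (C n).Nonempty)
    (hCN : ∀ n, C n ⊆ Finset.Ico (N n) (N (n + 1))) :
    (Set.ofPred fun j => ∃ n, j ∈ C n).Infinite := by
  refine Set.infinite_of_forall_exists_gt fun m => ?_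
  obtain ⟨j, hj⟩ := hC (m + 1)
  refine ⟨j, ⟨m + 1, hj⟩, ?_⟩
  calc m < m + 1 := m.lt_succ_self
    _ ≤ N (m + 1) := (strictMono_of_forall_subset_Ico hC hCN).le_apply
    _ ≤ j := (Finset.mem_Ico.mp (hCN _ hj)).1

theorem strictMono_blockEnum (hC : ∀ n, (C n).Nonempty)
    (hCN : ∀ n, C n ⊆ Finset.Ico (N n) (N (n + 1))) : StrictMono (blockEnum C) :=
  Nat.nth_strictMono (infinite_setOf_exists_mem_of_forall_subset_Ico hC hCN)

open Classical in
theorem filter_range_exists_mem_eq_biUnion (hN : Monotone N)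
    (hCN : ∀ n, C n ⊆ Finset.Ico (N n) (N (n + 1))) (m : ℕ) :
    {j ∈ Finset.range (N m) | ∃ n, j ∈ C n} = (Finset.range m).biUnion C := by
  ext j
  simp only [Finset.mem_filter, Finset.mem_range, Finset.mem_biUnion]
  constructor
  · rintro ⟨hjm, n, hj⟩
    have hjN := Finset.mem_Ico.mp (hCN n hj)
    exact ⟨n, lt_of_not_ge fun hmn => (hjN.1.trans_lt hjm).not_ge (hN hmn), hj⟩
  · rintro ⟨n, hnm, hj⟩
    exact ⟨(Finset.mem_Ico.mp (hCN n hj)).2.trans_le (hN hnm), n, hj⟩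

theorem sum_range_card_blockEnum {M : Type*} [AddCommMonoid M] (hC : ∀ n, (C n).Nonempty)
    (hCN : ∀ n, C n ⊆ Finset.Ico (N n) (N (n + 1))) (m : ℕ) (f : ℕ → M) :
    ∑ s ∈ Finset.range ((Finset.range m).biUnion C).card, f (blockEnum C s)
      = ∑ a ∈ Finset.range m, ∑ j ∈ C a, f j := by
  classical
  have hN := (strictMono_of_forall_subset_Ico hC hCN).monotone
  have h := Nat.sum_range_count_nth (infinite_setOf_exists_mem_of_forall_subset_Ico hC hCN)
    (N m) f
  rw [Nat.count_eq_card_filter_range, filter_range_exists_mem_eq_biUnion hN hCN] at h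
  rw [blockEnum, h, Finset.sum_biUnion
    ((pairwise_disjoint_of_forall_subset_Ico hN hCN).set_pairwise _)]

theorem tsum_blockEnum_eq_top {f : ℕ → ℝ≥0∞} {c : ℝ≥0∞} (hc : c ≠ 0)
    (hC : ∀ n, (C n).Nonempty) (hCN : ∀ n, C n ⊆ Finset.Ico (N n) (N (n + 1)))
    (hf : ∀ n, c ≤ ∑ j ∈ C n, f j) :
    ∑' s, f (blockEnum C s) = ⊤ := by
  refine eq_top_iff.mpr ?_
  calc ⊤ = ∑' _ : ℕ, c := (ENNReal.tsum_const_eq_top_of_ne_zero hc).symm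
    _ ≤ ∑' n, ∑ j ∈ C n, f j := ENNReal.tsum_le_tsum hf
    _ ≤ ∑' s, f (blockEnum C s) := ENNReal.tsum_le_of_sum_range_le fun m => by
        rw [← sum_range_card_blockEnum hC hCN]
        exact ENNReal.sum_le_tsum _

theorem frequently_sum_sum_blockEnum_le {R : Type*} [CommSemiring R] [PartialOrder R]
    [IsOrderedAddMonoid R] {f : ℕ → R} {g : ℕ → ℕ → R} {c : R}
    (hC : ∀ n, (C n).Nonempty) (hCN : ∀ n, C n ⊆ Finset.Ico (N n) (N (n + 1)))
    (hg : ∀ a b, ∑ i ∈ C a, ∑ j ∈ C b, g i j ≤ c * ((∑ i ∈ C a, f i) * ∑ j ∈ C b, f j)) :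
    ∃ᶠ Q in atTop, ∑ s ∈ Finset.range Q, ∑ t ∈ Finset.range Q, g (blockEnum C s) (blockEnum C t)
      ≤ c * (∑ s ∈ Finset.range Q, f (blockEnum C s)) ^ 2 := by
  refine frequently_atTop.mpr fun m => ⟨((Finset.range m).biUnion C).card, ?_, ?_⟩
  · simpa using Finset.card_le_card_biUnion (s := Finset.range m)
      ((pairwise_disjoint_of_forall_subset_Ico
        (strictMono_of_forall_subset_Ico hC hCN).monotone hCN).set_pairwise _)
      fun n _ => hC n
  · simp only [sum_range_card_blockEnum hC hCN m (g _), sum_range_card_blockEnum hC hCN m f]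
    rw [sum_range_card_blockEnum hC hCN m (fun i => ∑ b ∈ Finset.range m, ∑ j ∈ C b, g i j)]
    simp_rw [Finset.sum_comm (s := C _) (t := Finset.range m)]
    exact sum_sum_le_mul_sq_of_le fun a _ b _ => hg a b

end Blocks

theorem pairwise_quasi_independence_implies_subsequence_global_general
    {Ω : Type*} [MetricSpace Ω] [MeasurableSpace Ω] [BorelSpace Ω]
    (μ : Measure Ω)
    (x : ℕ → Ω) (r : ℕ → ℝ)
    (κ : ℝ) (hκ0 : 0 < κ)
    (K : ℕ → Finset ℕ)
    (hK : ∀ G : ℕ,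
      (∀ i ∈ K G, G ≤ i) ∧
      (∀ i ∈ K G, ∀ j ∈ K G, i ≠ j → Disjoint (ball (x i) (r i)) (ball (x j) (r j))) ∧
      ENNReal.ofReal κ ≤ μ (⋃ i ∈ K G, ball (x i) (r i)))
    (hKpair : ∀ G G' : ℕ,
      μ ((⋃ i ∈ K G, ball (x i) (r i)) ∩ ⋃ i ∈ K G', ball (x i) (r i))
        ≤ (ENNReal.ofReal (κ ^ 2))⁻¹ *
            (μ (⋃ i ∈ K G, ball (x i) (r i)) * μ (⋃ i ∈ K G', ball (x i) (r i)))) :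
    ∃ φ : ℕ → ℕ, StrictMono φ ∧
      (∑' i, μ (ball (x (φ i)) (r (φ i))) = ⊤) ∧
      ∃ᶠ Q in atTop,
        ∑ s ∈ Finset.range Q, ∑ t ∈ Finset.range Q,
            μ (ball (x (φ s)) (r (φ s)) ∩ ball (x (φ t)) (r (φ t)))
          ≤ (ENNReal.ofReal (κ ^ 2))⁻¹ *
              (∑ s ∈ Finset.range Q, μ (ball (x (φ s)) (r (φ s)))) ^ 2 := by
  have hdisj (G : ℕ) : (K G : Set ℕ).PairwiseDisjoint fun i => ball (x i) (r i) := (hK G).2.1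
  have hsum (G : ℕ) : μ (⋃ i ∈ K G, ball (x i) (r i)) = ∑ i ∈ K G, μ (ball (x i) (r i)) :=
    measure_biUnion_finset (hdisj G) fun _ _ => measurableSet_ball
  have hκ : ENNReal.ofReal κ ≠ 0 := (ENNReal.ofReal_pos.mpr hκ0).ne'
  have hκ_le (G : ℕ) : ENNReal.ofReal κ ≤ ∑ i ∈ K G, μ (ball (x i) (r i)) := hsum G ▸ (hK G).2.2
  have hne (G : ℕ) : (K G).Nonempty :=
    Finset.nonempty_of_sum_ne_zero (ne_bot_of_le_ne_bot hκ (hκ_le G))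
  obtain ⟨N, hN⟩ := exists_seq_forall_subset_Ico K fun G => (hK G).1
  refine ⟨blockEnum fun n => K (N n), strictMono_blockEnum (fun _ => hne _) hN,
    tsum_blockEnum_eq_top (f := fun i => μ (ball (x i) (r i))) hκ (fun _ => hne _) hN
      fun _ => hκ_le _,
    frequently_sum_sum_blockEnum_le (f := fun i => μ (ball (x i) (r i)))
      (g := fun i j => μ (ball (x i) (r i) ∩ ball (x j) (r j))) (fun _ => hne _) hN
      fun a b => ?_⟩
  rw [← measure_biUnion_inter_biUnion_finset μ (hdisj _) (hdisj _) fun _ => measurableSet_ball,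
    ← hsum, ← hsum]
  exact hKpair _ _

/-- **Proposition 2, (B) & (C) ⇒ (D).** Suppose `κ ∈ (0,1]` and for every `G` the finite
index set `K G ⊆ {i : i ≥ G}` picks out pairwise disjoint balls whose union `E_G` satisfies
`μ(E_G) ≥ κ` and `μ(E_G ∩ E_{G'}) ≤ κ⁻² μ(E_G) μ(E_{G'})` for all `G, G'`.  Then there is a
subsequence of the balls `B i` whose measures sum to infinity and which is quasi-independent
on average with constant `κ⁻²`. -/
theorem pairwise_quasi_independence_implies_subsequence_global
    {Ω : Type*} [MetricSpace Ω] [MeasurableSpace Ω] [BorelSpace Ω]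
    (μ : Measure Ω) [IsProbabilityMeasure μ]
    (x : ℕ → Ω) (r : ℕ → ℝ) (hr : ∀ i, 0 < r i)
    (κ : ℝ) (hκ0 : 0 < κ) (hκ1 : κ ≤ 1)
    (K : ℕ → Finset ℕ)
    (hK : ∀ G : ℕ,
      (∀ i ∈ K G, G ≤ i) ∧
      (∀ i ∈ K G, ∀ j ∈ K G, i ≠ j → Disjoint (ball (x i) (r i)) (ball (x j) (r j))) ∧
      ENNReal.ofReal κ ≤ μ (⋃ i ∈ K G, ball (x i) (r i)))
    (hKpair : ∀ G G' : ℕ,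
      μ ((⋃ i ∈ K G, ball (x i) (r i)) ∩ ⋃ i ∈ K G', ball (x i) (r i))
        ≤ (ENNReal.ofReal (κ ^ 2))⁻¹ *
            (μ (⋃ i ∈ K G, ball (x i) (r i)) * μ (⋃ i ∈ K G', ball (x i) (r i)))) :
    ∃ φ : ℕ → ℕ, StrictMono φ ∧
      (∑' i, μ (ball (x (φ i)) (r (φ i))) = ⊤) ∧
      ∃ᶠ Q in atTop,
        ∑ s ∈ Finset.range Q, ∑ t ∈ Finset.range Q,
            μ (ball (x (φ s)) (r (φ s)) ∩ ball (x (φ t)) (r (φ t)))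
          ≤ (ENNReal.ofReal (κ ^ 2))⁻¹ *
              (∑ s ∈ Finset.range Q, μ (ball (x (φ s)) (r (φ s)))) ^ 2 :=
  pairwise_quasi_independence_implies_subsequence_global_general μ x r κ hκ0 K hK hKpair
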